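/- Let κ ∈ ℂ, δ > 0, S > 0, and suppose R > 1 satisfies exp(R−1) > −log δ and exp(R) ≥ exp(R−1) + S + 1 + |κ|. If z ∈ ℂ satisfies |Im(E_κ^n(z))| < S and Re(E_κ^n(z)) > log δ for all n ≥ 1, and z is not an escaping point of E_κ, then Re(z) < R. -/

import Mathlib

open Filter Complex

/-! Once `Re w ≥ R`, the point `exp w + κ` has modulus at least `exp (Re w) - |κ|`, which is
huge; since its imaginary part is below `S` and its real part is not very negative, that modulus
must come from a large positive real part, so the real part grows by at least `1` at each step.
Starting from `Re z ≥ R` this forces the orbit of `z` to escape. -/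

theorem Real.exp_add_sub_le_exp {a x : ℝ} (ha : 0 ≤ a) (hax : a ≤ x) :
    Real.exp a + (x - a) ≤ Real.exp x := by
  have hlin : x - a + 1 ≤ Real.exp (x - a) := Real.add_one_le_exp _
  have hone : 1 ≤ Real.exp a := Real.one_le_exp ha
  calc Real.exp a + (x - a) ≤ Real.exp a * (x - a + 1) := by nlinarith
    _ ≤ Real.exp a * Real.exp (x - a) := by gcongr
    _ = Real.exp x := by rw [← Real.exp_add, add_sub_cancel]

theorem Complex.norm_sub_lt_re_of_abs_im_lt {u : ℂ} {L S : ℝ} (him : |u.im| < S)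
    (hre : -L < u.re) (hnorm : L + S ≤ ‖u‖) : ‖u‖ - S < u.re := by
  have htri := norm_le_abs_re_add_abs_im u
  have hpos : 0 ≤ u.re := by
    by_contra! hneg
    rw [abs_of_neg hneg] at htri
    linarith
  rw [abs_of_nonneg hpos] at htri
  linarith

theorem Complex.re_add_one_le_re_exp_add {κ w : ℂ} {R S : ℝ} (hR : 0 ≤ R)
    (hRS : Real.exp (R - 1) + S + 1 + ‖κ‖ ≤ Real.exp R) (hw : R ≤ w.re)
    (him : |(exp w + κ).im| < S) (hre : -Real.exp (R - 1) < (exp w + κ).re) :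
    w.re + 1 ≤ (exp w + κ).re := by
  have hnorm : Real.exp w.re - ‖κ‖ ≤ ‖exp w + κ‖ := by
    simpa only [norm_exp] using norm_sub_le_norm_add (exp w) κ
  have hgrowth := Real.exp_add_sub_le_exp hR hw
  have hR_le : R ≤ Real.exp (R - 1) := by linarith [Real.add_one_le_exp (R - 1)]
  have := norm_sub_lt_re_of_abs_im_lt him hre (by linarith)
  linarith

theorem tendsto_atTop_of_add_one_le {a : ℕ → ℝ} {R : ℝ} (h0 : R ≤ a 0)
    (hstep : ∀ n, R ≤ a n → a n + 1 ≤ a (n + 1)) : Tendsto a atTop atTop := by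
  have hlin : ∀ n : ℕ, a 0 + n ≤ a n := by
    intro n
    induction n with
    | zero => simp
    | succ n ih =>
      have := hstep n (by linarith [n.cast_nonneg (α := ℝ)])
      push_cast
      linarith
  exact tendsto_atTop_mono hlin (tendsto_atTop_add_const_left _ _ tendsto_natCast_atTop_atTop)

theorem non_escaping_has_small_re_general (κ : ℂ) (δ S R : ℝ)
    (hR : 1 < R)
    (hR1 : Real.exp (R - 1) > -Real.log δ)
    (hR2 : Real.exp R ≥ Real.exp (R - 1) + S + 1 + ‖κ‖)
    (z : ℂ)
    (him : ∀ n : ℕ, 1 ≤ n → |((fun w => Complex.exp w + κ)^[n] z).im| < S)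
    (hre : ∀ n : ℕ, 1 ≤ n → ((fun w => Complex.exp w + κ)^[n] z).re > Real.log δ)
    (hnoesc : ¬ Tendsto (fun n => ‖(fun w => Complex.exp w + κ)^[n] z‖)
        atTop atTop) :
    z.re < R := by
  by_contra! hz
  apply hnoesc
  have hstep : ∀ n, R ≤ ((fun w => exp w + κ)^[n] z).re →
      ((fun w => exp w + κ)^[n] z).re + 1 ≤ ((fun w => exp w + κ)^[n + 1] z).re := by
    intro n hn
    have him' := him (n + 1) n.succ_pos
    have hre' := hre (n + 1) n.succ_pos
    rw [Function.iterate_succ_apply'] at him' hre' ⊢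
    exact re_add_one_le_re_exp_add (by linarith) hR2 hn him' (by linarith)
  exact tendsto_atTop_mono (fun n => re_le_norm _) (tendsto_atTop_of_add_one_le hz hstep)

/-- If all forward iterates of `z` under `E_κ(w) = exp w + κ` have imaginary part
bounded by `S` and real part above `log δ`, and `z` is not an escaping point,
then `Re z < R`. -/
theorem non_escaping_has_small_re (κ : ℂ) (δ S R : ℝ) (hδ : 0 < δ) (hS : 0 < S)
    (hR : 1 < R)
    (hR1 : Real.exp (R - 1) > -Real.log δ)
    (hR2 : Real.exp R ≥ Real.exp (R - 1) + S + 1 + ‖κ‖)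
    (z : ℂ)
    (him : ∀ n : ℕ, 1 ≤ n → |((fun w => Complex.exp w + κ)^[n] z).im| < S)
    (hre : ∀ n : ℕ, 1 ≤ n → ((fun w => Complex.exp w + κ)^[n] z).re > Real.log δ)
    (hnoesc : ¬ Tendsto (fun n => ‖(fun w => Complex.exp w + κ)^[n] z‖)
        atTop atTop) :
    z.re < R :=
  non_escaping_has_small_re_general κ δ S R hR hR1 hR2 z him hre hnoesc
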